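/- In the Cantor game on [a₀, b₀] with an uncountable target set S ⊆ [a₀, b₀], if player B has a winning strategy, then: (1) [a₀, b₀] − S contains a generalized Cantor set; (2) [a₀, b₀] − S contains a nonempty perfect set; (3) [a₀, b₀] − S is dense in [a₀, b₀]. -/

import Mathlib

open Filter Set

/-- Data generating a generalized Cantor set: closed intervals
`I_{i₁,…,iₙ} = [c l, d l]` indexed by nonempty finite binary sequences
(`l : List Bool`, with the last entry the most recently added index),
inside a closed interval `[lo, hi]`, with diameters controlled by a strictly
decreasing positive sequence `e` tending to `0`. -/
structure GenCantor where
  lo : ℝ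
  hi : ℝ
  lo_lt_hi : lo < hi
  e : ℕ → ℝ
  e_pos : ∀ n : ℕ, 0 < e n
  e_anti : StrictAnti e
  e_lim : Filter.Tendsto e Filter.atTop (nhds 0)
  c : List Bool → ℝ
  d : List Bool → ℝ
  diam_pos : ∀ l : List Bool, l ≠ [] → 0 < d l - c l
  diam_lt : ∀ l : List Bool, l ≠ [] → d l - c l < e l.length
  root_sub : ∀ i : Bool, Set.Icc (c [i]) (d [i]) ⊆ Set.Icc lo hi
  nested : ∀ l : List Bool, l ≠ [] → ∀ i : Bool,
    Set.Icc (c (l ++ [i])) (d (l ++ [i])) ⊆ Set.Icc (c l) (d l)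
  disj : ∀ l : List Bool,
    Set.Icc (c (l ++ [false])) (d (l ++ [false])) ∩
      Set.Icc (c (l ++ [true])) (d (l ++ [true])) = ∅

/-- The generalized Cantor set generated by the data `G`:
`C = ⋂_{n ≥ 1} ⋃_{i₁,…,iₙ} I_{i₁,…,iₙ}`. -/
def GenCantor.C (G : GenCantor) : Set ℝ :=
  ⋂ n : ℕ, ⋃ l ∈ {l : List Bool | l.length = n + 1}, Set.Icc (G.c l) (G.d l)

/-- A set of reals is a generalized Cantor set if it is generated by some data. -/
def IsGenCantorSet (C : Set ℝ) : Prop := ∃ G : GenCantor, G.C = C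

/-- The length-`(n+1)` initial segment `[s 0, …, s n]` of a binary sequence. -/
def prefixSeq (s : ℕ → Bool) (n : ℕ) : List Bool := List.ofFn fun i : Fin (n + 1) => s i

/-- A set `P ⊆ ℝ` is perfect if it is closed and each of its points is a
limit point of `P`. -/
def PerfectSet (P : Set ℝ) : Prop := IsClosed P ∧ ∀ x ∈ P, x ∈ closure (P \ {x})

/-- A valid history for player A before A's move number `n+1`:
moves `a 0 = a₀ < a 1 < ⋯ < a n < b n < ⋯ < b 1 < b 0 = b₀`. -/
def ValidHistA (a₀ b₀ : ℝ) {n : ℕ} (a b : Fin (n + 1) → ℝ) : Prop :=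
  a 0 = a₀ ∧ b 0 = b₀ ∧ StrictMono a ∧ StrictAnti b ∧ a (Fin.last n) < b (Fin.last n)

/-- A strategy for player A in the Cantor game on `[a₀, b₀]`:
functions `f n` producing the move `a (n+1)` from the history
`(a 0, b 0, …, a n, b n)`, with `a n < f n a b < b n` on valid histories. -/
structure StratA (a₀ b₀ : ℝ) where
  f : (n : ℕ) → (Fin (n + 1) → ℝ) → (Fin (n + 1) → ℝ) → ℝ
  valid : ∀ (n : ℕ) (a b : Fin (n + 1) → ℝ), ValidHistA a₀ b₀ a b →
    a (Fin.last n) < f n a b ∧ f n a b < b (Fin.last n)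

/-- A valid history for player B before B's move number `n+1`:
`a 0 = a₀ < a 1 < ⋯ < a (n+1) < b n < ⋯ < b 1 < b 0 = b₀`. -/
def ValidHistB (a₀ b₀ : ℝ) {n : ℕ} (a : Fin (n + 2) → ℝ) (b : Fin (n + 1) → ℝ) : Prop :=
  a 0 = a₀ ∧ b 0 = b₀ ∧ StrictMono a ∧ StrictAnti b ∧ a (Fin.last (n + 1)) < b (Fin.last n)

/-- A strategy for player B in the Cantor game on `[a₀, b₀]`:
functions `g n` producing the move `b (n+1)` from the history
`(a 0, b 0, …, a n, b n, a (n+1))`, with `a (n+1) < g n a b < b n` on valid histories. -/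
structure StratB (a₀ b₀ : ℝ) where
  g : (n : ℕ) → (Fin (n + 2) → ℝ) → (Fin (n + 1) → ℝ) → ℝ
  valid : ∀ (n : ℕ) (a : Fin (n + 2) → ℝ) (b : Fin (n + 1) → ℝ), ValidHistB a₀ b₀ a b →
    a (Fin.last (n + 1)) < g n a b ∧ g n a b < b (Fin.last n)

/-- A play of the Cantor game on `[a₀, b₀]`:
`a (n-1) < a n < b n < b (n-1)` for all `n ≥ 1`. -/
def IsPlay (a₀ b₀ : ℝ) (a b : ℕ → ℝ) : Prop :=
  a 0 = a₀ ∧ b 0 = b₀ ∧ ∀ n : ℕ, a n < a (n + 1) ∧ a (n + 1) < b (n + 1) ∧ b (n + 1) < b n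

/-- A play is consistent with a strategy for A if each of A's moves is given by
the strategy applied to the preceding history. -/
def ConsistentA {a₀ b₀ : ℝ} (σ : StratA a₀ b₀) (a b : ℕ → ℝ) : Prop :=
  ∀ n : ℕ, a (n + 1) = σ.f n (fun i : Fin (n + 1) => a i) (fun i : Fin (n + 1) => b i)

/-- A play is consistent with a strategy for B if each of B's moves is given by
the strategy applied to the preceding history. -/
def ConsistentB {a₀ b₀ : ℝ} (σ : StratB a₀ b₀) (a b : ℕ → ℝ) : Prop :=
  ∀ n : ℕ, b (n + 1) = σ.g n (fun i : Fin (n + 2) => a i) (fun i : Fin (n + 1) => b i)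

/-- The limit set of a strategy for player A: all limits `lim aₙ` over plays
consistent with the strategy. -/
def limitSetA {a₀ b₀ : ℝ} (σ : StratA a₀ b₀) : Set ℝ :=
  {x | ∃ a b : ℕ → ℝ, IsPlay a₀ b₀ a b ∧ ConsistentA σ a b ∧
    Filter.Tendsto a Filter.atTop (nhds x)}

/-- The limit set of a strategy for player B: all limits `lim aₙ` over plays
consistent with the strategy. -/
def limitSetB {a₀ b₀ : ℝ} (σ : StratB a₀ b₀) : Set ℝ :=
  {x | ∃ a b : ℕ → ℝ, IsPlay a₀ b₀ a b ∧ ConsistentB σ a b ∧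
    Filter.Tendsto a Filter.atTop (nhds x)}

/-- A strategy for A is winning for target set `S` iff its limit set lies in `S`. -/
def WinningA {a₀ b₀ : ℝ} (σ : StratA a₀ b₀) (S : Set ℝ) : Prop := limitSetA σ ⊆ S

/-- A strategy for B is winning for target set `S` iff its limit set lies in
`[a₀, b₀] − S`. -/
def WinningB {a₀ b₀ : ℝ} (σ : StratB a₀ b₀) (S : Set ℝ) : Prop :=
  limitSetB σ ⊆ Set.Icc a₀ b₀ \ S

/-- `B` is a Bernstein set in `X ⊆ ℝ` (with its subspace topology) if `B ⊆ X` and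
neither `B` nor `X − B` contains a set that is uncountable and closed in `X`. -/
def IsBernsteinIn (X B : Set ℝ) : Prop :=
  B ⊆ X ∧
    (¬ ∃ T : Set ℝ, T ⊆ B ∧ ¬ T.Countable ∧ IsClosed (Subtype.val ⁻¹' T : Set X)) ∧
    (¬ ∃ T : Set ℝ, T ⊆ X \ B ∧ ¬ T.Countable ∧ IsClosed (Subtype.val ⁻¹' T : Set X))

/-- The set of right condensation points of `S` in `[a₀, b₀]`. -/
def rightCondPts (a₀ b₀ : ℝ) (S : Set ℝ) : Set ℝ :=
  {x ∈ Set.Icc a₀ b₀ | ∀ ε > 0, ¬ (Set.Ioo x (x + ε) ∩ S).Countable}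

/-!
Fix a winning strategy `σ` of B. Whatever strategy A follows against `σ`, the limit of the
play lies in `[a₀, b₀] \ S`; so it suffices to exhibit A-strategies with controlled limits.
Density: A can keep all her moves inside any prescribed `[t, u] ⊆ [a₀, b₀]`.
Cantor set: at every turn A either probes very close to `bₙ`, or plays beyond `σ`'s reply to
that probe. The positions reached along the `2^ℕ` branches form a binary tree of nested,
pairwise disjoint intervals of length `< 2^{-n}`, i.e. a generalized Cantor set, each point
of which is the limit of a play against `σ`. Every generalized Cantor set is nonempty and
perfect.
-/

open Topology

lemma prefixSeq_length (s : ℕ → Bool) (n : ℕ) : (prefixSeq s n).length = n + 1 := by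
  simp [prefixSeq]

lemma prefixSeq_ne_nil (s : ℕ → Bool) (n : ℕ) : prefixSeq s n ≠ [] := by
  simp [← List.length_pos_iff, prefixSeq_length]

lemma prefixSeq_succ (s : ℕ → Bool) (n : ℕ) :
    prefixSeq s (n + 1) = prefixSeq s n ++ [s (n + 1)] := by
  rw [prefixSeq, List.ofFn_succ', List.concat_eq_append, prefixSeq]
  simp only [Fin.val_castSucc, Fin.val_last]

lemma prefixSeq_getD (s : ℕ → Bool) {n i : ℕ} (h : i ≤ n) :
    (prefixSeq s n).getD i false = s i := by
  simp only [prefixSeq, List.getD_eq_getElem?_getD, List.getElem?_ofFn, Nat.lt_succ_of_le h,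
    Option.getD_some, dif_pos]

lemma prefixSeq_congr {s s' : ℕ → Bool} {n : ℕ} (h : ∀ i ≤ n, s i = s' i) :
    prefixSeq s n = prefixSeq s' n := by
  simp only [prefixSeq, List.ofFn_inj]
  exact funext fun i => h i (Nat.lt_succ_iff.1 i.isLt)

namespace GenCantor

variable (G : GenCantor)

lemma c_le_d {l : List Bool} (hl : l ≠ []) : G.c l ≤ G.d l := by
  linarith [G.diam_pos l hl]

lemma isClosed_C : IsClosed G.C :=
  isClosed_iInter fun n =>
    (List.finite_length_eq Bool (n + 1)).isClosed_biUnion fun _ _ => isClosed_Icc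

lemma disjoint_of_length_eq {l l' : List Bool} (hlen : l.length = l'.length) (hne : l ≠ l') :
    Disjoint (Icc (G.c l) (G.d l)) (Icc (G.c l') (G.d l')) := by
  induction l using List.reverseRecOn generalizing l' with
  | nil => exact absurd (List.length_eq_zero_iff.1 hlen.symm).symm hne
  | append_singleton t x ih =>
    obtain rfl | ⟨t', x', rfl⟩ := l'.eq_nil_or_concat'
    · simp at hlen
    have ht : t.length = t'.length := by simpa using hlen
    by_cases htt : t = t'
    · subst htt
      have hx : x ≠ x' := fun h => hne (h ▸ rfl)
      rw [Set.disjoint_iff_inter_eq_empty]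
      cases x <;> cases x' <;> first
        | exact absurd rfl hx
        | exact G.disj t
        | rw [Set.inter_comm]; exact G.disj t
    · have ht0 : t ≠ [] := by
        rintro rfl
        exact htt (List.length_eq_zero_iff.1 ht.symm).symm
      have ht0' : t' ≠ [] := fun h => ht0 (List.length_eq_zero_iff.1 (ht.trans (by simp [h])))
      exact (ih ht htt).mono (G.nested t ht0 x) (G.nested t' ht0' x')

lemma mem_C_iff {x : ℝ} :
    x ∈ G.C ↔ ∀ n, ∃ l : List Bool, l.length = n + 1 ∧ x ∈ Icc (G.c l) (G.d l) := by
  simp only [GenCantor.C, mem_iInter, mem_iUnion, mem_ofPred_eq, exists_prop]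

lemma mem_C_of_branch {x : ℝ} (s : ℕ → Bool)
    (hx : ∀ n, x ∈ Icc (G.c (prefixSeq s n)) (G.d (prefixSeq s n))) : x ∈ G.C :=
  G.mem_C_iff.2 fun n => ⟨prefixSeq s n, prefixSeq_length s n, hx n⟩

lemma exists_branch_of_mem_C {x : ℝ} (hx : x ∈ G.C) :
    ∃ s : ℕ → Bool, ∀ n, x ∈ Icc (G.c (prefixSeq s n)) (G.d (prefixSeq s n)) := by
  choose L hlen hmem using G.mem_C_iff.1 hx
  have hne : ∀ n, L n ≠ [] := fun n h => by simpa [h] using hlen n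
  -- The interval of length `n + 1` containing `x` is unique, so the `L n` are coherent.
  have hunique : ∀ n (l : List Bool), l.length = n + 1 → x ∈ Icc (G.c l) (G.d l) → l = L n :=
    fun n l hl hxl => by_contra fun h =>
      Set.disjoint_left.1 (G.disjoint_of_length_eq (hl.trans (hlen n).symm) h) hxl (hmem n)
  have hsucc : ∀ n, L (n + 1) = L n ++ [(L (n + 1)).getD (n + 1) false] := by
    intro n
    obtain ⟨t, y, ht⟩ := (L (n + 1)).eq_nil_or_concat'.resolve_left (hne _)
    have htlen : t.length = n + 1 := by simpa [ht] using hlen (n + 1)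
    have htn : t = L n :=
      hunique n t htlen (G.nested t (by rintro rfl; simp at htlen) y (ht ▸ hmem (n + 1)))
    rw [ht, ← htn, List.getD_append_right _ _ _ _ htlen.le]
    simp [htlen]
  refine ⟨fun n => (L n).getD n false, fun n => ?_⟩
  suffices prefixSeq (fun n => (L n).getD n false) n = L n from this ▸ hmem n
  induction n with
  | zero =>
    obtain ⟨y, hy⟩ := List.length_eq_one_iff.1 (hlen 0)
    simp [prefixSeq, hy]
  | succ n ih => rw [prefixSeq_succ, ih, ← hsucc]

lemma exists_mem_branch (s : ℕ → Bool) :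
    ∃ x, ∀ n, x ∈ Icc (G.c (prefixSeq s n)) (G.d (prefixSeq s n)) := by
  have hanti : Antitone fun n => Icc (G.c (prefixSeq s n)) (G.d (prefixSeq s n)) :=
    antitone_nat_of_succ_le fun n => by
      rw [prefixSeq_succ]
      exact G.nested _ (prefixSeq_ne_nil s n) _
  exact ⟨_, Set.mem_iInter.1 (ciSup_mem_iInter_Icc_of_antitone_Icc hanti
    fun n => G.c_le_d (prefixSeq_ne_nil s n))⟩

lemma abs_sub_lt_of_mem {l : List Bool} (hl : l ≠ []) {x y : ℝ} (hx : x ∈ Icc (G.c l) (G.d l))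
    (hy : y ∈ Icc (G.c l) (G.d l)) : |x - y| < G.e l.length := by
  have := G.diam_lt l hl
  rw [abs_sub_lt_iff]
  constructor <;> linarith [hx.1, hx.2, hy.1, hy.2]

lemma exists_e_lt {ε : ℝ} (hε : 0 < ε) : ∃ n, G.e (n + 1) < ε :=
  (((tendsto_add_atTop_iff_nat 1).2 G.e_lim).eventually (gt_mem_nhds hε)).exists

lemma eq_of_mem_branch (s : ℕ → Bool) {x y : ℝ}
    (hx : ∀ n, x ∈ Icc (G.c (prefixSeq s n)) (G.d (prefixSeq s n)))
    (hy : ∀ n, y ∈ Icc (G.c (prefixSeq s n)) (G.d (prefixSeq s n))) : x = y := by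
  by_contra hxy
  obtain ⟨n, hn⟩ := G.exists_e_lt (abs_pos.2 (sub_ne_zero.2 hxy))
  have := G.abs_sub_lt_of_mem (prefixSeq_ne_nil s n) (hx n) (hy n)
  rw [prefixSeq_length] at this
  exact lt_asymm this hn

lemma nonempty_C : G.C.Nonempty :=
  let ⟨x, hx⟩ := G.exists_mem_branch fun _ => false
  ⟨x, G.mem_C_of_branch _ hx⟩

lemma perfectSet_C : PerfectSet G.C := by
  refine ⟨G.isClosed_C, fun x hx => Metric.mem_closure_iff.2 fun ε hε => ?_⟩
  obtain ⟨s, hs⟩ := G.exists_branch_of_mem_C hx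
  obtain ⟨n, hn⟩ := G.exists_e_lt hε
  -- Follow the branch of `x` for `n + 1` steps, then leave it.
  set s' := Function.update s (n + 1) (!s (n + 1))
  obtain ⟨y, hy⟩ := G.exists_mem_branch s'
  have hpre : prefixSeq s' n = prefixSeq s n :=
    prefixSeq_congr fun i hi => Function.update_of_ne (by omega) _ _
  have hfork : prefixSeq s (n + 1) ≠ prefixSeq s' (n + 1) := fun h => by
    simpa [s'] using (prefixSeq_getD s le_rfl).symm.trans
      ((congrArg (List.getD · (n + 1) false) h).trans (prefixSeq_getD s' le_rfl))
  have hyx : y ≠ x := fun h => Set.disjoint_left.1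
    (G.disjoint_of_length_eq (by simp [prefixSeq_length]) hfork) (hs (n + 1)) (h ▸ hy (n + 1))
  have hdist := G.abs_sub_lt_of_mem (prefixSeq_ne_nil s n)
    (hs n) (hpre ▸ hy n)
  rw [prefixSeq_length] at hdist
  exact ⟨y, ⟨G.mem_C_of_branch s' hy, hyx⟩, by rw [Real.dist_eq]; linarith⟩

end GenCantor

lemma Fin.snoc_comp_val {α : Type*} (f : ℕ → α) (n : ℕ) :
    (Fin.snoc (fun i : Fin (n + 1) => f i) (f (n + 1)) : Fin (n + 2) → α) =
      fun i : Fin (n + 2) => f i :=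
  Fin.snoc_init_self (fun i : Fin (n + 2) => f i)

lemma strictMono_fin_of_lt_succ {α : Type*} [Preorder α] {f : ℕ → α} {n : ℕ}
    (h : ∀ m < n, f m < f (m + 1)) :
    StrictMono fun i : Fin (n + 1) => f i :=
  Fin.strictMono_iff_lt_succ.2 fun i => h i i.isLt

lemma strictAnti_fin_of_succ_lt {α : Type*} [Preorder α] {f : ℕ → α} {n : ℕ}
    (h : ∀ m < n, f (m + 1) < f m) :
    StrictAnti fun i : Fin (n + 1) => f i :=
  Fin.strictAnti_iff_succ_lt.2 fun i => h i i.isLt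

section Play

lemma validHistA_of_steps {a₀ b₀ : ℝ} {a b : ℕ → ℝ} {n : ℕ} (ha : a 0 = a₀) (hb : b 0 = b₀)
    (hab : a₀ < b₀) (h : ∀ m < n, a m < a (m + 1) ∧ a (m + 1) < b (m + 1) ∧ b (m + 1) < b m) :
    ValidHistA a₀ b₀ (fun i : Fin (n + 1) => a i) (fun i => b i) := by
  refine ⟨ha, hb, strictMono_fin_of_lt_succ fun m hm => (h m hm).1,
    strictAnti_fin_of_succ_lt (f := b) fun m hm => (h m hm).2.2, ?_⟩
  cases n with
  | zero => simpa [ha, hb] using hab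
  | succ n => simpa using (h n n.lt_succ_self).2.1

lemma ValidHistA.snoc {a₀ b₀ : ℝ} {n : ℕ} {a b : Fin (n + 1) → ℝ} (H : ValidHistA a₀ b₀ a b)
    {x : ℝ} (h₁ : a (Fin.last n) < x) (h₂ : x < b (Fin.last n)) :
    ValidHistB a₀ b₀ (Fin.snoc a x) b := by
  obtain ⟨ha, hb, hmono, hanti, -⟩ := H
  refine ⟨(Fin.snoc_castSucc (α := fun _ => ℝ) x a 0).trans ha, hb,
    Fin.strictMono_iff_lt_succ.2 fun i => ?_, hanti, by simpa using h₂⟩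
  rcases Fin.eq_castSucc_or_eq_last i with ⟨i, rfl⟩ | rfl
  · rw [Fin.succ_castSucc, Fin.snoc_castSucc, Fin.snoc_castSucc]
    exact hmono Fin.castSucc_lt_succ
  · simpa using h₁

variable {a₀ b₀ : ℝ}

namespace IsPlay

variable {a b : ℕ → ℝ}

lemma strictMono (h : IsPlay a₀ b₀ a b) : StrictMono a :=
  strictMono_nat_of_lt_succ fun n => (h.2.2 n).1

lemma strictAnti (h : IsPlay a₀ b₀ a b) : StrictAnti b :=
  strictAnti_nat_of_succ_lt fun n => (h.2.2 n).2.2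

lemma fst_lt_snd (h : IsPlay a₀ b₀ a b) (hab : a₀ < b₀) (m n : ℕ) : a m < b n := by
  have hlt : ∀ k, a k < b k := fun k => by
    cases k with
    | zero => rwa [h.1, h.2.1]
    | succ k => exact (h.2.2 k).2.1
  rcases le_total m n with hmn | hnm
  · exact (h.strictMono.monotone hmn).trans_lt (hlt n)
  · exact (hlt m).trans_le (h.strictAnti.antitone hnm)

lemma iSup_mem_Icc (h : IsPlay a₀ b₀ a b) (hab : a₀ < b₀) (n : ℕ) : ⨆ k, a k ∈ Icc (a n) (b n) :=
  Set.mem_iInter.1 (h.strictMono.monotone.ciSup_mem_iInter_Icc_of_antitone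
    h.strictAnti.antitone fun k => (h.fst_lt_snd hab k k).le) n

lemma tendsto_iSup (h : IsPlay a₀ b₀ a b) (hab : a₀ < b₀) : Tendsto a atTop (𝓝 (⨆ k, a k)) :=
  tendsto_atTop_ciSup h.strictMono.monotone
    ⟨b 0, forall_mem_range.2 fun k => (h.fst_lt_snd hab k 0).le⟩

end IsPlay

variable (σ : StratB a₀ b₀)

noncomputable def play (τ : StratA a₀ b₀) : ℕ → ℝ × ℝ
  | 0 => (a₀, b₀)
  | n + 1 =>
      let a : Fin (n + 1) → ℝ := fun i => (play τ i).1
      let b : Fin (n + 1) → ℝ := fun i => (play τ i).2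
      (τ.f n a b, σ.g n (Fin.snoc a (τ.f n a b)) b)
  decreasing_by all_goals exact i.isLt

variable (τ : StratA a₀ b₀)

lemma play_zero : play σ τ 0 = (a₀, b₀) := by rw [play]

lemma play_succ (n : ℕ) : play σ τ (n + 1) =
    (τ.f n (fun i : Fin (n + 1) => (play σ τ i).1) (fun i => (play σ τ i).2),
      σ.g n (Fin.snoc (fun i : Fin (n + 1) => (play σ τ i).1)
        (τ.f n (fun i : Fin (n + 1) => (play σ τ i).1) (fun i => (play σ τ i).2)))
        (fun i => (play σ τ i).2)) := by
  rw [play]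

lemma play_succ_fst (n : ℕ) : (play σ τ (n + 1)).1 =
    τ.f n (fun i : Fin (n + 1) => (play σ τ i).1) (fun i => (play σ τ i).2) := by
  rw [play_succ]

lemma play_succ_snd (n : ℕ) : (play σ τ (n + 1)).2 =
    σ.g n (fun i : Fin (n + 2) => (play σ τ i).1) (fun i : Fin (n + 1) => (play σ τ i).2) := by
  rw [← Fin.snoc_comp_val (fun k => (play σ τ k).1), play_succ_fst, play_succ]

lemma play_step (hab : a₀ < b₀) (n : ℕ) :
    (play σ τ n).1 < (play σ τ (n + 1)).1 ∧ (play σ τ (n + 1)).1 < (play σ τ (n + 1)).2 ∧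
      (play σ τ (n + 1)).2 < (play σ τ n).2 := by
  induction n using Nat.strong_induction_on with
  | _ n ih =>
  have hA := validHistA_of_steps (a := fun k => (play σ τ k).1) (b := fun k => (play σ τ k).2)
    (by simp [play_zero]) (by simp [play_zero]) hab ih
  have h1 := τ.valid n _ _ hA
  simp only [Fin.val_last, ← play_succ_fst] at h1
  have hB : ValidHistB a₀ b₀ (fun i : Fin (n + 2) => (play σ τ i).1) (fun i => (play σ τ i).2) :=
    ⟨by simp [play_zero], by simp [play_zero],
      strictMono_fin_of_lt_succ fun m hm => by
        rcases Nat.lt_succ_iff_lt_or_eq.1 hm with hm | rfl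
        exacts [(ih m hm).1, h1.1],
      strictAnti_fin_of_succ_lt (f := fun k => (play σ τ k).2) fun m hm => (ih m hm).2.2,
      by simpa using h1.2⟩
  have h2 := σ.valid n _ _ hB
  simp only [Fin.val_last, ← play_succ_snd] at h2
  exact ⟨h1.1, h2⟩

lemma isPlay_play (hab : a₀ < b₀) :
    IsPlay a₀ b₀ (fun n => (play σ τ n).1) (fun n => (play σ τ n).2) :=
  ⟨by simp [play_zero], by simp [play_zero], play_step σ τ hab⟩

lemma validHistA_play (hab : a₀ < b₀) (n : ℕ) :
    ValidHistA a₀ b₀ (fun i : Fin (n + 1) => (play σ τ i).1) (fun i => (play σ τ i).2) :=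
  validHistA_of_steps (a := fun k => (play σ τ k).1) (b := fun k => (play σ τ k).2)
    (by simp [play_zero]) (by simp [play_zero]) hab fun m _ => play_step σ τ hab m

lemma consistentB_play : ConsistentB σ (fun n => (play σ τ n).1) (fun n => (play σ τ n).2) :=
  play_succ_snd σ τ

lemma play_congr {τ' : StratA a₀ b₀} {n : ℕ} (h : ∀ m < n, τ.f m = τ'.f m) :
    play σ τ n = play σ τ' n := by
  induction n using Nat.strong_induction_on with
  | _ n ih =>
  cases n with
  | zero => rw [play_zero, play_zero]
  | succ n =>
    have hpre : ∀ i : Fin (n + 1), play σ τ i = play σ τ' i := fun i =>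
      ih i (by omega) fun m hm => h m (by omega)
    simp only [play_succ, hpre, h n n.lt_succ_self]

noncomputable def playLim : ℝ := ⨆ n, (play σ τ n).1

lemma playLim_mem_Icc (hab : a₀ < b₀) (n : ℕ) :
    playLim σ τ ∈ Icc (play σ τ n).1 (play σ τ n).2 :=
  (isPlay_play σ τ hab).iSup_mem_Icc hab n

variable {σ} in
lemma WinningB.playLim_mem {S : Set ℝ} (hσ : WinningB σ S) (hab : a₀ < b₀)
    (τ : StratA a₀ b₀) : playLim σ τ ∈ Icc a₀ b₀ \ S :=
  hσ ⟨_, _, isPlay_play σ τ hab, consistentB_play σ τ, (isPlay_play σ τ hab).tendsto_iSup hab⟩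

end Play

section Density

variable {a₀ b₀ : ℝ}

/-- The `else` branch is never taken in a play with `a₀ ≤ t < u ≤ b₀`; it only makes the
strategy valid on every history. -/
noncomputable def StratA.toward (t u : ℝ) : StratA a₀ b₀ where
  f n a b :=
    if max (a (Fin.last n)) t < min (b (Fin.last n)) u then
      (max (a (Fin.last n)) t + min (b (Fin.last n)) u) / 2
    else (a (Fin.last n) + b (Fin.last n)) / 2
  valid n a b h := by
    have := h.2.2.2.2
    split_ifs with h'
    · constructor <;> linarith [le_max_left (a (Fin.last n)) t, min_le_left (b (Fin.last n)) u]
    · constructor <;> linarith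

variable (σ : StratB a₀ b₀) {t u : ℝ}

lemma play_toward_succ {n : ℕ}
    (h : max (play σ (StratA.toward t u) n).1 t < min (play σ (StratA.toward t u) n).2 u) :
    (play σ (StratA.toward t u) (n + 1)).1 =
      (max (play σ (StratA.toward t u) n).1 t + min (play σ (StratA.toward t u) n).2 u) / 2 := by
  rw [play_succ_fst]
  exact if_pos h

lemma play_toward_max_lt_min (hab : a₀ < b₀) (ht : a₀ ≤ t) (htu : t < u) (hu : u ≤ b₀) (n : ℕ) :
    max (play σ (StratA.toward t u) n).1 t < min (play σ (StratA.toward t u) n).2 u := by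
  induction n with
  | zero => simpa [play_zero, ht, hu] using htu
  | succ n ih =>
    have hstep := (play_step σ (StratA.toward t u) hab n).2.1
    rw [play_toward_succ σ ih] at hstep ⊢
    have := min_le_right (play σ (StratA.toward t u) n).2 u
    have := le_max_right (play σ (StratA.toward t u) n).1 t
    exact max_lt (lt_min hstep (by linarith)) (lt_min (by linarith) htu)

lemma playLim_toward_mem_Icc (hab : a₀ < b₀) (ht : a₀ ≤ t) (htu : t < u) (hu : u ≤ b₀) :
    playLim σ (StratA.toward t u) ∈ Icc t u := by
  have hmem := play_toward_max_lt_min σ hab ht htu hu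
  constructor
  · have h1 := play_toward_succ σ (hmem 0)
    simp only [play_zero, max_eq_right ht, min_eq_right hu] at h1
    linarith [(playLim_mem_Icc σ (StratA.toward t u) hab 1).1]
  · exact ciSup_le fun n => ((le_max_left _ _).trans_lt ((hmem n).trans_le (min_le_right _ _))).le

variable {σ} in
lemma WinningB.Icc_subset_closure_diff {S : Set ℝ} (hσ : WinningB σ S)
    (hab : a₀ < b₀) : Icc a₀ b₀ ⊆ closure (Icc a₀ b₀ \ S) := by
  intro y hy
  refine Metric.mem_closure_iff.2 fun ε hε => ?_
  set t := max a₀ (y - ε / 2)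
  set u := min b₀ (y + ε / 2)
  have htu : t < u :=
    max_lt (lt_min hab (by linarith [hy.1])) (lt_min (by linarith [hy.2]) (by linarith))
  obtain ⟨hxt, hxu⟩ := playLim_toward_mem_Icc σ hab (le_max_left _ _) htu (min_le_left _ _)
  refine ⟨_, hσ.playLim_mem hab (StratA.toward t u), ?_⟩
  rw [Real.dist_eq, abs_lt]
  constructor <;> linarith [le_max_right a₀ (y - ε / 2), min_le_right b₀ (y + ε / 2)]

end Density

section CantorScheme

variable {a₀ b₀ : ℝ} (σ : StratB a₀ b₀)

/-- Probing this close to `bₙ` makes every later interval shorter than `2^{-(n+1)}`. -/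
noncomputable def probe (n : ℕ) (a b : Fin (n + 1) → ℝ) : ℝ :=
  max ((a (Fin.last n) + b (Fin.last n)) / 2) (b (Fin.last n) - (1 / 2) ^ (n + 1))

lemma probe_mem {n : ℕ} {a b : Fin (n + 1) → ℝ} (h : a (Fin.last n) < b (Fin.last n)) :
    a (Fin.last n) < probe n a b ∧ probe n a b < b (Fin.last n) := by
  have : (0 : ℝ) < (1 / 2) ^ (n + 1) := by positivity
  exact ⟨lt_max_of_lt_left (by linarith), max_lt (by linarith) (by linarith)⟩

lemma reply_mem {n : ℕ} {a b : Fin (n + 1) → ℝ} (H : ValidHistA a₀ b₀ a b) :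
    probe n a b < σ.g n (Fin.snoc a (probe n a b)) b ∧
      σ.g n (Fin.snoc a (probe n a b)) b < b (Fin.last n) := by
  obtain ⟨h₁, h₂⟩ := probe_mem H.2.2.2.2
  simpa using σ.valid n _ _ (H.snoc h₁ h₂)

/-- Option `true` plays past B's reply to the probe, so the continuations after `false` and
`true` lie in disjoint intervals. -/
noncomputable def cantorMove (n : ℕ) (a b : Fin (n + 1) → ℝ) (i : Bool) : ℝ :=
  if i then (σ.g n (Fin.snoc a (probe n a b)) b + b (Fin.last n)) / 2 else probe n a b

lemma cantorMove_mem {n : ℕ} {a b : Fin (n + 1) → ℝ} (H : ValidHistA a₀ b₀ a b) (i : Bool) :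
    probe n a b ≤ cantorMove σ n a b i ∧ cantorMove σ n a b i < b (Fin.last n) := by
  have := reply_mem σ H
  cases i
  · exact ⟨le_rfl, (probe_mem H.2.2.2.2).2⟩
  · constructor <;> simp only [cantorMove, if_true] <;> linarith

noncomputable def cantorStrat (s : ℕ → Bool) : StratA a₀ b₀ where
  f n a b := cantorMove σ n a b (s n)
  valid n _ _ H :=
    ⟨(probe_mem H.2.2.2.2).1.trans_le (cantorMove_mem σ H (s n)).1, (cantorMove_mem σ H (s n)).2⟩

lemma play_cantorStrat_congr {s s' : ℕ → Bool} {n : ℕ} (h : ∀ m < n, s m = s' m) :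
    play σ (cantorStrat σ s) n = play σ (cantorStrat σ s') n :=
  play_congr σ _ fun m hm => by simp only [cantorStrat, h m hm]

lemma play_cantorStrat_width (hab : a₀ < b₀) (s : ℕ → Bool) (n : ℕ) :
    (play σ (cantorStrat σ s) (n + 1)).2 - (play σ (cantorStrat σ s) (n + 1)).1 <
      (1 / 2) ^ (n + 1) := by
  set x := play σ (cantorStrat σ s)
  have hprobe : (x n).2 - (1 / 2) ^ (n + 1) ≤ (x (n + 1)).1 := by
    rw [play_succ_fst]
    exact (le_max_right _ _).trans
      (cantorMove_mem σ (validHistA_play σ (cantorStrat σ s) hab n) (s n)).1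
  linarith [(play_step σ (cantorStrat σ s) hab n).2.2]

lemma play_cantorStrat_fork (hab : a₀ < b₀) {s s' : ℕ → Bool} {n : ℕ} (h : ∀ m < n, s m = s' m)
    (hs : s n = false) (hs' : s' n = true) :
    (play σ (cantorStrat σ s) (n + 1)).2 < (play σ (cantorStrat σ s') (n + 1)).1 := by
  have hpre : ∀ i : Fin (n + 1), play σ (cantorStrat σ s') i = play σ (cantorStrat σ s) i :=
    fun i => (play_cantorStrat_congr σ fun m hm => h m (by omega)).symm
  have := reply_mem σ (validHistA_play σ (cantorStrat σ s) hab n)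
  simp only [play_succ, hpre]
  simp only [cantorStrat, cantorMove, hs, hs', if_true, Bool.false_eq_true, if_false] at this ⊢
  linarith

lemma play_cantorStrat_append (l : List Bool) (i : Bool) :
    play σ (cantorStrat σ ((l ++ [i]).getD · false)) l.length =
      play σ (cantorStrat σ (l.getD · false)) l.length :=
  play_cantorStrat_congr σ fun _ hm => List.getD_append _ _ _ _ hm

noncomputable def cantorScheme (hab : a₀ < b₀) : GenCantor where
  lo := a₀
  hi := b₀
  lo_lt_hi := hab
  e n := (1 / 2) ^ n
  e_pos _ := by positivity
  e_anti _ _ h := pow_lt_pow_right_of_lt_one₀ (by norm_num) (by norm_num) h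
  e_lim := tendsto_pow_atTop_nhds_zero_of_lt_one (by norm_num) (by norm_num)
  c l := (play σ (cantorStrat σ (l.getD · false)) l.length).1
  d l := (play σ (cantorStrat σ (l.getD · false)) l.length).2
  diam_pos l hl := by
    obtain ⟨m, hm⟩ := Nat.exists_eq_succ_of_ne_zero (List.length_pos_iff.2 hl).ne'
    rw [hm]
    exact sub_pos.2 (play_step σ (cantorStrat σ (l.getD · false)) hab m).2.1
  diam_lt l hl := by
    obtain ⟨m, hm⟩ := Nat.exists_eq_succ_of_ne_zero (List.length_pos_iff.2 hl).ne'
    rw [hm]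
    exact play_cantorStrat_width σ hab _ m
  root_sub i := by
    have := play_step σ (cantorStrat σ ([i].getD · false)) hab 0
    simp only [play_zero] at this
    exact Icc_subset_Icc this.1.le this.2.2.le
  nested l _ i := by
    have := play_step σ (cantorStrat σ ((l ++ [i]).getD · false)) hab l.length
    rw [play_cantorStrat_append] at this
    simpa using Icc_subset_Icc this.1.le this.2.2.le
  disj l := by
    have := play_cantorStrat_fork σ hab (s := ((l ++ [false]).getD · false))
      (s' := ((l ++ [true]).getD · false)) (n := l.length)
      (fun _ hm => (List.getD_append _ _ _ _ hm).trans (List.getD_append _ _ _ _ hm).symm)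
      (by simp) (by simp)
    rw [Set.eq_empty_iff_forall_notMem]
    rintro x ⟨⟨-, hx₁⟩, hx₂, -⟩
    simp only [List.length_append, List.length_singleton] at hx₁ hx₂
    linarith

variable {σ}

lemma playLim_mem_cantorScheme_branch (hab : a₀ < b₀) (s : ℕ → Bool) (n : ℕ) :
    playLim σ (cantorStrat σ s) ∈
      Icc ((cantorScheme σ hab).c (prefixSeq s n)) ((cantorScheme σ hab).d (prefixSeq s n)) := by
  have h : play σ (cantorStrat σ ((prefixSeq s n).getD · false)) (n + 1) =
      play σ (cantorStrat σ s) (n + 1) :=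
    play_cantorStrat_congr σ fun _ hm => prefixSeq_getD s (Nat.lt_succ_iff.1 hm)
  simp only [cantorScheme, prefixSeq_length, h]
  exact playLim_mem_Icc σ _ hab (n + 1)

lemma WinningB.cantorScheme_C_subset {S : Set ℝ} (hσ : WinningB σ S) (hab : a₀ < b₀) :
    (cantorScheme σ hab).C ⊆ Icc a₀ b₀ \ S := by
  intro x hx
  obtain ⟨s, hs⟩ := (cantorScheme σ hab).exists_branch_of_mem_C hx
  rw [(cantorScheme σ hab).eq_of_mem_branch s hs (playLim_mem_cantorScheme_branch hab s)]
  exact hσ.playLim_mem hab _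

end CantorScheme

theorem stmt8_general (a₀ b₀ : ℝ) (hab : a₀ < b₀) (S : Set ℝ)
    (h : ∃ σ : StratB a₀ b₀, WinningB σ S) :
    (∃ C : Set ℝ, IsGenCantorSet C ∧ C ⊆ Set.Icc a₀ b₀ \ S) ∧
    (∃ P : Set ℝ, P.Nonempty ∧ PerfectSet P ∧ P ⊆ Set.Icc a₀ b₀ \ S) ∧
    Set.Icc a₀ b₀ ⊆ closure (Set.Icc a₀ b₀ \ S) := by
  obtain ⟨σ, hσ⟩ := h
  set G := cantorScheme σ hab
  have hG : G.C ⊆ Icc a₀ b₀ \ S := hσ.cantorScheme_C_subset hab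
  exact ⟨⟨G.C, ⟨G, rfl⟩, hG⟩, ⟨G.C, G.nonempty_C, G.perfectSet_C, hG⟩,
    hσ.Icc_subset_closure_diff hab⟩

/-- If player B has a winning strategy then `[a₀, b₀] − S` contains
a generalized Cantor set, contains a nonempty perfect set, and is dense in
`[a₀, b₀]`. -/
theorem stmt8 (a₀ b₀ : ℝ) (hab : a₀ < b₀) (S : Set ℝ) (hS : S ⊆ Set.Icc a₀ b₀)
    (hSunc : ¬ S.Countable) (h : ∃ σ : StratB a₀ b₀, WinningB σ S) :
    (∃ C : Set ℝ, IsGenCantorSet C ∧ C ⊆ Set.Icc a₀ b₀ \ S) ∧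
    (∃ P : Set ℝ, P.Nonempty ∧ PerfectSet P ∧ P ⊆ Set.Icc a₀ b₀ \ S) ∧
    Set.Icc a₀ b₀ ⊆ closure (Set.Icc a₀ b₀ \ S) :=
  stmt8_general a₀ b₀ hab S h
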